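/- Let m, q ∈ ℝ with m > |q| and t ∈ ℝ. Define P(r) := e^{−2t} + m/r + e^{2t}(m² − q²)/(4r²), U(r) := √P(r), and V(r) := (−e^{−2t} + e^{2t}(m² − q²)/(4r²)) / U(r) for r > 0. Then: (i) V is twice differentiable on (0, ∞) and V''(r) + (2/r)·V'(r) = (3 q² / (4 r⁴ P(r)²))·V(r) for all r > 0; (ii) V(r₀) = 0 at r₀ := (√(m² − q²)/2)e^{2t}; and (iii) V(r) → −e^{−t} as r → ∞. -/

import Mathlib

/-!
In the inverse radius `s = 1/r` the flat radial Laplacian becomes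
`Δ(g ∘ r⁻¹) = r⁻⁴ g''(1/r)` (Kelvin transform), and `P` becomes the quadratic
`Q(s) = A + b s + C s² / 4` with `A = e^{-2t}`, `b = m`, `C = e^{2t}(m² - q²)`.
Since `C Q - Q'² = A C - b²`, the conformal factor `u = √Q` solves the Ermakov–Pinney
equation `u'' = -k / (4u³)` with `k = b² - A C = q²`. This equation is invariant under the
scaling `u ↦ λ^{-1/2} u(λ s)`, so the generator `2 s u' - u` of the scaling solves the
linearised equation `w'' = 3k / (4u⁴) w`; and `2 s u' - u = (s Q' - Q) / u` is the model
velocity `V` written in `s`.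
-/

open Filter Topology

section KelvinTransform

variable {g g' : ℝ → ℝ} {g'' r : ℝ}

theorem radial_laplacian_comp_inv (hr : r ≠ 0)
    (hg : ∀ᶠ s in 𝓝 r⁻¹, HasDerivAt g (g' s) s) (hg' : HasDerivAt g' g'' r⁻¹) :
    DifferentiableAt ℝ (fun x => g x⁻¹) r ∧ DifferentiableAt ℝ (deriv fun x => g x⁻¹) r ∧
      deriv (deriv fun x => g x⁻¹) r + 2 / r * deriv (fun x => g x⁻¹) r = g'' / r ^ 4 := by
  have hV : ∀ᶠ x in 𝓝 r, HasDerivAt (fun x => g x⁻¹) (-g' x⁻¹ / x ^ 2) x := by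
    filter_upwards [(continuousAt_inv₀ hr).eventually hg, eventually_ne_nhds hr]
      with x hgx hx
    exact (hgx.comp x (hasDerivAt_inv hx)).congr_deriv (by ring)
  have hV' : HasDerivAt (fun x => -g' x⁻¹ / x ^ 2) ((g'' + 2 * r * g' r⁻¹) / r ^ 4) r :=
    ((hg'.comp r (hasDerivAt_inv hr)).neg.div (hasDerivAt_pow 2 r)
      (by positivity)).congr_deriv <| by
        simp only [Function.comp_apply, Pi.neg_apply]
        field_simp
        ring
  have hderiv : deriv (fun x => g x⁻¹) =ᶠ[𝓝 r] fun x => -g' x⁻¹ / x ^ 2 :=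
    hV.mono fun x hx => hx.deriv
  refine ⟨hV.self_of_nhds.differentiableAt,
    (hV'.congr_of_eventuallyEq hderiv).differentiableAt, ?_⟩
  rw [hderiv.deriv_eq, hV'.deriv, hV.self_of_nhds.deriv]
  field_simp
  ring

end KelvinTransform

def scalingVariation (u u' : ℝ → ℝ) (s : ℝ) : ℝ := 2 * s * u' s - u s

section ErmakovPinney

variable {u u' : ℝ → ℝ} {k s : ℝ}

theorem hasDerivAt_scalingVariation (hu : HasDerivAt u (u' s) s)
    (hu' : HasDerivAt u' (-k / (4 * u s ^ 3)) s) :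
    HasDerivAt (scalingVariation u u') (u' s - k * s / (2 * u s ^ 3)) s :=
  (((hasDerivAt_id' s).const_mul 2).mul hu').sub hu |>.congr_deriv (by ring)

theorem hasDerivAt_scalingVariation_deriv (hu : HasDerivAt u (u' s) s)
    (hu' : HasDerivAt u' (-k / (4 * u s ^ 3)) s) (hs : u s ≠ 0) :
    HasDerivAt (fun x => u' x - k * x / (2 * u x ^ 3))
      (3 * k / (4 * u s ^ 4) * scalingVariation u u' s) s := by
  refine (hu'.sub (((hasDerivAt_id' s).const_mul k).div ((hu.fun_pow 3).const_mul 2)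
    (mul_ne_zero two_ne_zero (pow_ne_zero 3 hs)))).congr_deriv ?_
  simp only [scalingVariation]
  field_simp
  ring

end ErmakovPinney

noncomputable section ReissnerNordstrom

variable (A b C : ℝ)

/-- `√P(1/s)`: the Reissner–Nordström conformal factor in the inverse radius `s = 1/r`. -/
def rnConformalFactor (s : ℝ) : ℝ := √(A + b * s + C * s ^ 2 / 4)

def rnConformalFactorDeriv (s : ℝ) : ℝ := (b + C * s / 2) / (2 * rnConformalFactor A b C s)

variable {A b C} {s : ℝ}

theorem hasDerivAt_rnConformalFactor (hs : 0 < A + b * s + C * s ^ 2 / 4) :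
    HasDerivAt (rnConformalFactor A b C) (rnConformalFactorDeriv A b C s) s := by
  have hQ : HasDerivAt (fun x => A + b * x + C * x ^ 2 / 4) (b + C * s / 2) s :=
    ((((hasDerivAt_id' s).const_mul b).const_add A).add
      (((hasDerivAt_pow 2 s).const_mul C).div_const 4)).congr_deriv (by ring)
  exact hQ.sqrt hs.ne'

theorem hasDerivAt_rnConformalFactorDeriv (hs : 0 < A + b * s + C * s ^ 2 / 4) :
    HasDerivAt (rnConformalFactorDeriv A b C)
      (-(b ^ 2 - A * C) / (4 * rnConformalFactor A b C s ^ 3)) s := by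
  have hU0 : rnConformalFactor A b C s ≠ 0 := (Real.sqrt_pos.2 hs).ne'
  have hU2 : rnConformalFactor A b C s ^ 2 = A + b * s + C * s ^ 2 / 4 := Real.sq_sqrt hs.le
  refine (((((hasDerivAt_id' s).const_mul C).div_const 2).const_add b).fun_div
    ((hasDerivAt_rnConformalFactor hs).const_mul 2) (by positivity)).congr_deriv ?_
  simp only [rnConformalFactorDeriv]
  field_simp
  linear_combination 16 * C * hU2

variable (A b C) in
def rnVelocity (s : ℝ) : ℝ :=
  scalingVariation (rnConformalFactor A b C) (rnConformalFactorDeriv A b C) s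

theorem rnVelocity_eq_div (s : ℝ) :
    rnVelocity A b C s = (-A + C * s ^ 2 / 4) / rnConformalFactor A b C s := by
  unfold rnVelocity scalingVariation rnConformalFactorDeriv
  rcases (Real.sqrt_nonneg (A + b * s + C * s ^ 2 / 4)).eq_or_lt with hU | hU
  · -- both sides are `_ / 0 = 0`
    simp [rnConformalFactor, ← hU]
  · have hU2 : rnConformalFactor A b C s ^ 2 = A + b * s + C * s ^ 2 / 4 :=
      Real.sq_sqrt (Real.sqrt_pos.1 hU).le
    have hU0 : rnConformalFactor A b C s ≠ 0 := hU.ne'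
    field_simp
    linear_combination (-8) * hU2

theorem radial_laplacian_rnVelocity_comp_inv {r : ℝ} (hr : r ≠ 0)
    (hQ : ∀ᶠ s in 𝓝 r⁻¹, 0 < A + b * s + C * s ^ 2 / 4) :
    DifferentiableAt ℝ (fun x => rnVelocity A b C x⁻¹) r ∧
      DifferentiableAt ℝ (deriv fun x => rnVelocity A b C x⁻¹) r ∧
      deriv (deriv fun x => rnVelocity A b C x⁻¹) r +
          2 / r * deriv (fun x => rnVelocity A b C x⁻¹) r =
        3 * (b ^ 2 - A * C) / (4 * r ^ 4 * (A + b / r + C / (4 * r ^ 2)) ^ 2) *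
          rnVelocity A b C r⁻¹ := by
  have hQr := hQ.self_of_nhds
  obtain ⟨hV, hV', hlap⟩ := radial_laplacian_comp_inv hr
    (hQ.mono fun s hs => hasDerivAt_scalingVariation (hasDerivAt_rnConformalFactor hs)
      (hasDerivAt_rnConformalFactorDeriv hs))
    (hasDerivAt_scalingVariation_deriv (hasDerivAt_rnConformalFactor hQr)
      (hasDerivAt_rnConformalFactorDeriv hQr) (Real.sqrt_pos.2 hQr).ne')
  refine ⟨hV, hV', hlap.trans ?_⟩
  have hU4 : rnConformalFactor A b C r⁻¹ ^ 4 = (A + b / r + C / (4 * r ^ 2)) ^ 2 := by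
    rw [show 4 = 2 * 2 by rfl, pow_mul, rnConformalFactor, Real.sq_sqrt hQr.le]
    ring
  rw [hU4, rnVelocity]
  field_simp

theorem tendsto_rnVelocity_comp_inv_atTop (hA : 0 < A) :
    Tendsto (fun r => rnVelocity A b C r⁻¹) atTop (𝓝 (-√A)) := by
  have hQ0 : 0 < A + b * 0 + C * 0 ^ 2 / 4 := by simpa using hA
  have hcont := (hasDerivAt_scalingVariation (hasDerivAt_rnConformalFactor hQ0)
    (hasDerivAt_rnConformalFactorDeriv hQ0)).continuousAt
  have hlim : rnVelocity A b C 0 = -√A := by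
    simp [rnVelocity, scalingVariation, rnConformalFactor]
  exact hlim ▸ hcont.tendsto.comp tendsto_inv_atTop_zero

end ReissnerNordstrom

/-- The model velocity `V = (−e^{−2t} + e^{2t}(m² − q²)/(4r²))/√P` solves the
radial linearized equation `V'' + (2/r)V' = (3q²/(4r⁴P²))V`, vanishes at
`r₀ = (√(m² − q²)/2)e^{2t}`, and tends to `−e^{−t}` at infinity. -/
theorem RN_model_velocity_equation (m q t : ℝ) (hq : |q| < m) :
    let P : ℝ → ℝ := fun r =>
      Real.exp (-2 * t) + m / r + Real.exp (2 * t) * (m ^ 2 - q ^ 2) / (4 * r ^ 2)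
    let V : ℝ → ℝ := fun r =>
      (-Real.exp (-2 * t) + Real.exp (2 * t) * (m ^ 2 - q ^ 2) / (4 * r ^ 2)) /
        Real.sqrt (P r)
    let r₀ : ℝ := (Real.sqrt (m ^ 2 - q ^ 2) / 2) * Real.exp (2 * t)
    (∀ r : ℝ, 0 < r →
        DifferentiableAt ℝ V r ∧ DifferentiableAt ℝ (deriv V) r ∧
          deriv (deriv V) r + (2 / r) * deriv V r =
            (3 * q ^ 2 / (4 * r ^ 4 * (P r) ^ 2)) * V r) ∧
      V r₀ = 0 ∧ Tendsto V atTop (nhds (-Real.exp (-t))) := by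
  intro P V r₀
  have hm : 0 < m := (abs_nonneg q).trans_lt hq
  have hmq : 0 < m ^ 2 - q ^ 2 := by nlinarith [abs_nonneg q, sq_abs q]
  have hV : V = fun r =>
      rnVelocity (Real.exp (-2 * t)) m (Real.exp (2 * t) * (m ^ 2 - q ^ 2)) r⁻¹ := by
    funext r
    simp only [V, P]
    rw [rnVelocity_eq_div, rnConformalFactor]
    ring_nf
  refine ⟨fun r hr => ?_, ?_, ?_⟩
  · have hQ : ∀ᶠ s in 𝓝 r⁻¹,
        0 < Real.exp (-2 * t) + m * s + Real.exp (2 * t) * (m ^ 2 - q ^ 2) * s ^ 2 / 4 :=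
      eventually_gt_nhds (inv_pos.2 hr) |>.mono fun s hs => by positivity
    have hq2 : m ^ 2 - Real.exp (-2 * t) * (Real.exp (2 * t) * (m ^ 2 - q ^ 2)) = q ^ 2 := by
      rw [neg_mul, Real.exp_neg]
      field_simp
      ring
    have hlap := radial_laplacian_rnVelocity_comp_inv hr.ne' hQ
    rw [hq2] at hlap
    rwa [hV]
  · have hr₀ : r₀ ^ 2 = (m ^ 2 - q ^ 2) * Real.exp (2 * t) ^ 2 / 4 := by
      rw [mul_pow, div_pow, Real.sq_sqrt hmq.le]
      ring
    simp only [V]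
    rw [hr₀, div_eq_zero_iff, neg_mul, Real.exp_neg]
    left
    field_simp
    ring
  · have hlim := tendsto_rnVelocity_comp_inv_atTop (b := m)
      (C := Real.exp (2 * t) * (m ^ 2 - q ^ 2)) (Real.exp_pos (-2 * t))
    rwa [← Real.exp_half, show -2 * t / 2 = -t by ring, ← hV] at hlim
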